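/- Let T be a tree with distance d, and suppose every leaf i has a unique neighbor p(i) (its parent) with the parents belonging to a set V_z. Then for any two leaves i != j, exp(-d(i,j)) = theta_i * B_{p(i),p(j)} * theta_j, where theta_i = exp(-d(i, p(i))) and B_{u,v} = exp(-d(u,v)) for u, v in V_z. -/

import Mathlib

open SimpleGraph

/-- The unique path between two vertices of a tree. -/
noncomputable def treePath {V : Type*} (G : SimpleGraph V) (hG : G.IsTree) (u v : V) :
    G.Walk u v :=
  (hG.existsUnique_path u v).exists.choose

/-- The weighted path distance in a tree. -/
noncomputable def treeDist {V : Type*} (G : SimpleGraph V) (hG : G.IsTree)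
    (w : Sym2 V → ℝ) (u v : V) : ℝ :=
  ((treePath G hG u v).edges.map w).sum

/-!
The path from leaf `i` to leaf `j` must leave `i` through its only neighbour `p(i)` and enter `j`
through its only neighbour `p(j)`, so it is the edge `i p(i)`, a path from `p(i)` to `p(j)`, and
the edge `p(j) j`. Since paths in a tree are unique, the weighted distance is additive along any
path, which gives `d(i,j) = d(i,p(i)) + d(p(i),p(j)) + d(p(j),j)`; exponentiate.
-/

namespace SimpleGraph.Walk

variable {V : Type*} {G : SimpleGraph V}

theorem exists_eq_cons_of_existsUnique_adj {x y v : V} (hx : ∃! z, G.Adj x z) (hxy : G.Adj x y)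
    (hxv : x ≠ v) (p : G.Walk x v) : ∃ q : G.Walk y v, p = cons hxy q := by
  cases p with
  | nil => exact absurd rfl hxv
  | cons h q =>
    obtain rfl := hx.unique h hxy
    exact ⟨q, rfl⟩

theorem exists_eq_concat_of_existsUnique_adj {x y u : V} (hx : ∃! z, G.Adj x z)
    (hyx : G.Adj y x) (hux : u ≠ x) (p : G.Walk u x) : ∃ q : G.Walk u y, p = q.concat hyx := by
  obtain ⟨q, hq⟩ := exists_eq_cons_of_existsUnique_adj hx hyx.symm hux.symm p.reverse
  refine ⟨q.reverse, ?_⟩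
  rw [← p.reverse_reverse, hq, reverse_cons, concat_eq_append]

end SimpleGraph.Walk

section TreeDist

variable {V : Type*} {G : SimpleGraph V} (hG : G.IsTree) (w : Sym2 V → ℝ)

theorem treePath_isPath (u v : V) : (treePath G hG u v).IsPath :=
  (hG.existsUnique_path u v).exists.choose_spec

theorem treeDist_eq_of_isPath {u v : V} {p : G.Walk u v} (hp : p.IsPath) :
    treeDist G hG w u v = (p.edges.map w).sum := by
  rw [treeDist, (hG.existsUnique_path u v).unique (treePath_isPath hG u v) hp]

theorem treeDist_append {u v x : V} {p : G.Walk u v} {q : G.Walk v x}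
    (hpq : (p.append q).IsPath) :
    treeDist G hG w u x = treeDist G hG w u v + treeDist G hG w v x := by
  rw [treeDist_eq_of_isPath hG w hpq, treeDist_eq_of_isPath hG w hpq.of_append_left,
    treeDist_eq_of_isPath hG w hpq.of_append_right, Walk.edges_append, List.map_append,
    List.sum_append]

end TreeDist

theorem tsg_is_dcsbm_general {V : Type*} [Fintype V]
    (G : SimpleGraph V) [DecidableRel G.Adj] (hG : G.IsTree) (w : Sym2 V → ℝ)
    (i j pi pj : V) (hij : i ≠ j)
    (hi : G.degree i = 1) (hj : G.degree j = 1)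
    (hadj_i : G.Adj i pi) (hadj_j : G.Adj j pj)
    (hpi : 1 < G.degree pi) :
    Real.exp (-(treeDist G hG w i j)) =
      Real.exp (-(treeDist G hG w i pi)) * Real.exp (-(treeDist G hG w pi pj)) *
        Real.exp (-(treeDist G hG w pj j)) := by
  have hpij : pi ≠ j := by rintro rfl; omega
  obtain ⟨q, hq⟩ := Walk.exists_eq_cons_of_existsUnique_adj
    (degree_eq_one_iff_existsUnique_adj.mp hi) hadj_i hij (treePath G hG i j)
  obtain ⟨r, rfl⟩ := Walk.exists_eq_concat_of_existsUnique_adj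
    (degree_eq_one_iff_existsUnique_adj.mp hj) hadj_j.symm hpij q
  have hpath : (hadj_i.toWalk.append (r.append hadj_j.symm.toWalk)).IsPath := by
    have h := treePath_isPath hG i j
    rwa [hq] at h
  have hsplit : treeDist G hG w i j =
      treeDist G hG w i pi + treeDist G hG w pi pj + treeDist G hG w pj j := by
    rw [treeDist_append hG w hpath, treeDist_append hG w hpath.of_append_right, add_assoc]
  rw [hsplit, ← Real.exp_add, ← Real.exp_add, neg_add, neg_add]

/-- T-Stochastic Graphs are DCSBMs: in a tree with distance `d`, if `i ≠ j`
are leaves with respective (internal) parents `pi` and `pj`, then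
`exp(-d(i,j)) = θ_i * B_{pi,pj} * θ_j` with `θ_x = exp(-d(x, p(x)))` and
`B_{u,v} = exp(-d(u,v))`. -/
theorem tsg_is_dcsbm {V : Type*} [Fintype V] [DecidableEq V]
    (G : SimpleGraph V) [DecidableRel G.Adj] (hG : G.IsTree) (w : Sym2 V → ℝ)
    (i j pi pj : V) (hij : i ≠ j)
    (hi : G.degree i = 1) (hj : G.degree j = 1)
    (hadj_i : G.Adj i pi) (hadj_j : G.Adj j pj)
    (hpi : 1 < G.degree pi) (hpj : 1 < G.degree pj) :
    Real.exp (-(treeDist G hG w i j)) =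
      Real.exp (-(treeDist G hG w i pi)) * Real.exp (-(treeDist G hG w pi pj)) *
        Real.exp (-(treeDist G hG w pj j)) :=
  tsg_is_dcsbm_general G hG w i j pi pj hij hi hj hadj_i hadj_j hpi
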